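/- arXiv:1504.01648 — 2 statements merged into one kernel-verified Lean document; each statement's English description precedes it below -/
import Mathlib

section
/- Let (R, 𝔪) be a Noetherian local ring and let a₁,…,a_d ∈ 𝔪 be elements whose initial forms in_𝔪(a_i) ∈ gr_𝔪(R) generate an ideal whose radical equals the irrelevant ideal ⊕_{n≥1} 𝔪^n/𝔪^{n+1}. Then the radical of the ideal ⟨a₁,…,a_d⟩ in R equals 𝔪, i.e. ⟨a₁,…,a_d⟩ is 𝔪-primary. -/
/-!
Write `𝔪` for the maximal ideal, `I = ⟨a₁,…,a_d⟩`, `J ⊆ gr_𝔪(R)` for the ideal of initial forms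
and `K` for the irrelevant ideal. The initial form of an element outside `𝔪` has degree zero
and survives the augmentation, so `J ⊆ √J = K` forces `I ⊆ 𝔪`. As `gr_𝔪(R)` is Noetherian, `K ^ N ⊆ J` for some `N`. The initial
form of any `x ∈ 𝔪 ^ N` lies in `K ^ N ⊆ J`; comparing degree-`N` coefficients in the Rees
algebra gives `x ∈ I + 𝔪 ^ (N + 1)`. Nakayama's lemma turns `𝔪 ^ N ⊆ I + 𝔪 • 𝔪 ^ N` into
`𝔪 ^ N ⊆ I`, hence `√I = 𝔪`.
-/

open Polynomial

noncomputable section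

/-- The associated graded ring `gr_𝔞(R)`, realized as `Rees(𝔞)/𝔞·Rees(𝔞)`. -/
abbrev AssocGradedRing {R : Type} [CommRing R] (a : Ideal R) : Type :=
  ↥(reesAlgebra a) ⧸ (Ideal.map (algebraMap R ↥(reesAlgebra a)) a)

/-- The initial form in `gr_𝔞(R)` of an element `x ∈ 𝔞^n`, i.e. the class of `x·tⁿ`. -/
def initialForm {R : Type} [CommRing R] (a : Ideal R) (n : ℕ) (x : R) (hx : x ∈ a ^ n) :
    AssocGradedRing a :=
  Ideal.Quotient.mk _ ⟨Polynomial.monomial n x, reesAlgebra.monomial_mem.2 hx⟩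

/-- The augmentation `gr_𝔞(R) → R/𝔞` (projection onto the degree-zero part);
its kernel is the irrelevant ideal `⨁_{n ≥ 1} 𝔞^n/𝔞^{n+1}`. -/
def grAugmentation {R : Type} [CommRing R] (a : Ideal R) : AssocGradedRing a →+* R ⧸ a :=
  Ideal.Quotient.lift _
    ((Ideal.Quotient.mk a).comp
      ((Polynomial.constantCoeff (R := R)).comp (Subalgebra.val (reesAlgebra a)).toRingHom))
    (fun x hx => by
      revert x
      rw [show (∀ x ∈ Ideal.map (algebraMap R ↥(reesAlgebra a)) a,
          ((Ideal.Quotient.mk a).comp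
            (constantCoeff.comp (reesAlgebra a).val.toRingHom)) x = 0) ↔
          Ideal.map (algebraMap R ↥(reesAlgebra a)) a ≤
            RingHom.ker ((Ideal.Quotient.mk a).comp
              (constantCoeff.comp (reesAlgebra a).val.toRingHom)) from Iff.rfl,
        Ideal.map_le_iff_le_comap]
      intro y hy
      simp only [Ideal.mem_comap, RingHom.mem_ker, RingHom.comp_apply,
        AlgHom.toRingHom_eq_coe, RingHom.coe_coe, Subalgebra.coe_val,
        Subalgebra.coe_algebraMap, Polynomial.algebraMap_eq, Polynomial.constantCoeff_apply, Polynomial.coeff_C_zero,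
        Ideal.Quotient.eq_zero_iff_mem]
      exact hy)

namespace reesAlgebra

variable {R : Type*} [CommRing R] (a : Ideal R)

theorem coeff_mem_pow_succ_of_mem_map {q : reesAlgebra a}
    (hq : q ∈ Ideal.map (algebraMap R (reesAlgebra a)) a) (k : ℕ) :
    (q : R[X]).coeff k ∈ a ^ (k + 1) := by
  replace hq : q ∈ a • (⊤ : Submodule R (reesAlgebra a)) := by rwa [Ideal.smul_top_eq_map]
  refine Submodule.smul_induction_on hq (fun r hr f _ => ?_) fun f g hf hg => ?_
  · rw [Subalgebra.coe_smul, coeff_smul, smul_eq_mul, mul_comm, pow_succ]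
    exact Ideal.mul_mem_mul ((mem_reesAlgebra_iff a f).1 f.2 k) hr
  · simpa using add_mem hf hg

theorem coeff_mem_span_of_mem_span_monomial {ι : Type*} (t : ι → ℕ) (b : ι → R)
    (hb : ∀ i, b i ∈ a ^ t i) {y : reesAlgebra a}
    (hy : y ∈ Ideal.span (Set.range fun i => ⟨monomial (t i) (b i), monomial_mem.2 (hb i)⟩))
    (k : ℕ) : (y : R[X]).coeff k ∈ Ideal.span (Set.range b) := by
  suffices h : Ideal.span (Set.range fun i => ⟨monomial (t i) (b i), monomial_mem.2 (hb i)⟩) ≤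
      (Ideal.map C (Ideal.span (Set.range b))).comap (reesAlgebra a).val from
    Ideal.mem_map_C_iff.1 (h hy) k
  refine Ideal.span_le.2 (Set.range_subset_iff.2 fun i => Ideal.mem_map_C_iff.2 fun m => ?_)
  rw [Subalgebra.coe_val, coeff_monomial]
  split_ifs
  · exact Ideal.subset_span ⟨i, rfl⟩
  · exact zero_mem _

end reesAlgebra

section InitialForm

variable {R : Type} [CommRing R] (a : Ideal R)

theorem grAugmentation_initialForm (k : ℕ) (x : R) (hx : x ∈ a ^ k) :
    grAugmentation a (initialForm a k x hx) = if k = 0 then Ideal.Quotient.mk a x else 0 := by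
  simp only [grAugmentation, initialForm, Ideal.Quotient.lift_mk, RingHom.comp_apply,
    AlgHom.toRingHom_eq_coe, RingHom.coe_coe, Subalgebra.coe_val, constantCoeff_apply,
    coeff_monomial]
  split_ifs <;> simp

theorem mem_of_initialForm_mem_ker {k : ℕ} {x : R} {hx : x ∈ a ^ k}
    (h : initialForm a k x hx ∈ RingHom.ker (grAugmentation a)) : x ∈ a := by
  rw [RingHom.mem_ker, grAugmentation_initialForm] at h
  split_ifs at h with hk
  · exact Ideal.Quotient.eq_zero_iff_mem.1 h
  · exact Ideal.pow_le_self hk hx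

theorem initialForm_add (k : ℕ) (x y : R) (hx : x ∈ a ^ k) (hy : y ∈ a ^ k) :
    initialForm a k (x + y) (add_mem hx hy) = initialForm a k x hx + initialForm a k y hy := by
  rw [initialForm, initialForm, initialForm, ← map_add]
  congr 1
  ext : 1
  simp

theorem initialForm_mul (j k : ℕ) (x y : R) (hx : x ∈ a ^ j) (hy : y ∈ a ^ k) :
    initialForm a (j + k) (x * y) (pow_add a j k ▸ Ideal.mul_mem_mul hx hy) =
      initialForm a j x hx * initialForm a k y hy := by
  rw [initialForm, initialForm, initialForm, ← map_mul]
  congr 1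
  ext : 1
  simp [monomial_mul_monomial]

theorem initialForm_mem_ker_pow (k : ℕ) (x : R) (hx : x ∈ a ^ k) :
    initialForm a k x hx ∈ RingHom.ker (grAugmentation a) ^ k := by
  induction k generalizing x with
  | zero => rw [Submodule.pow_zero, Ideal.one_eq_top]; trivial
  | succ k ih =>
    have hx' : x ∈ a ^ k * a := pow_succ a k ▸ hx
    induction hx' using Submodule.mul_induction_on' with
    | mem_mul_mem y hy z hz =>
      rw [← pow_one a] at hz
      rw [initialForm_mul a k 1 y z hy hz, Submodule.pow_succ]
      refine Ideal.mul_mem_mul (ih y hy) ?_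
      simp [RingHom.mem_ker, grAugmentation_initialForm]
    | add y hy z hz hy' hz' =>
      rw [← pow_succ] at hy hz
      rw [initialForm_add a _ y z hy hz]
      exact add_mem (hy' hy) (hz' hz)

theorem mem_span_sup_pow_succ_of_initialForm_mem_span {ι : Type*} (t : ι → ℕ) (b : ι → R)
    (hb : ∀ i, b i ∈ a ^ t i) {k : ℕ} {x : R} (hx : x ∈ a ^ k)
    (h : initialForm a k x hx ∈ Ideal.span (Set.range fun i => initialForm a (t i) (b i) (hb i))) :
    x ∈ Ideal.span (Set.range b) ⊔ a ^ (k + 1) := by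
  set e : ι → reesAlgebra a := fun i => ⟨monomial (t i) (b i), reesAlgebra.monomial_mem.2 (hb i)⟩
  rw [show (Set.range fun i => initialForm a (t i) (b i) (hb i)) =
      Ideal.Quotient.mk _ '' Set.range e from Set.range_comp _ _, ← Ideal.map_span] at h
  obtain ⟨y, hy, hyx⟩ := (Ideal.mem_map_iff_of_surjective _ Ideal.Quotient.mk_surjective).1 h
  have hxy := neg_mem (Ideal.Quotient.eq.1 hyx)
  refine Submodule.mem_sup.2 ⟨_, reesAlgebra.coeff_mem_span_of_mem_span_monomial a t b hb hy k,
    _, reesAlgebra.coeff_mem_pow_succ_of_mem_map a hxy k, ?_⟩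
  simp

end InitialForm

theorem Ideal.pow_le_of_le_sup_pow_succ {R : Type*} [CommRing R] [IsNoetherianRing R]
    {a I : Ideal R} (ha : a ≤ jacobson ⊥) {N : ℕ} (h : a ^ N ≤ I ⊔ a ^ (N + 1)) : a ^ N ≤ I :=
  Submodule.le_of_le_smul_of_le_jacobson_bot (IsNoetherian.noetherian _) ha
    (by rwa [smul_eq_mul, ← pow_succ'])

theorem radical_span_eq_maximalIdeal_of_initialForms_general (R : Type) [CommRing R]
    [IsNoetherianRing R] [IsLocalRing R] (d : ℕ) (a : Fin d → R) (n : Fin d → ℕ)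
    (hmem : ∀ i, a i ∈ IsLocalRing.maximalIdeal R ^ n i)
    (hrad : Ideal.radical (R := AssocGradedRing (IsLocalRing.maximalIdeal R))
        (Ideal.span (Set.range fun i =>
        initialForm (IsLocalRing.maximalIdeal R) (n i) (a i) (hmem i))) =
      RingHom.ker (grAugmentation (IsLocalRing.maximalIdeal R))) :
    (Ideal.span (Set.range a)).radical = IsLocalRing.maximalIdeal R := by
  have hI𝔪 : Ideal.span (Set.range a) ≤ IsLocalRing.maximalIdeal R :=
    Ideal.span_le.2 <| Set.range_subset_iff.2 fun i =>
      mem_of_initialForm_mem_ker _ (hrad.le (Ideal.le_radical (Ideal.subset_span ⟨i, rfl⟩)))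
  obtain ⟨N, hN⟩ := Ideal.exists_radical_pow_le_of_fg (Ideal.span (Set.range fun i =>
    initialForm (IsLocalRing.maximalIdeal R) (n i) (a i) (hmem i))) (IsNoetherian.noetherian _)
  rw [hrad] at hN
  have h𝔪N : IsLocalRing.maximalIdeal R ^ N ≤ Ideal.span (Set.range a) :=
    Ideal.pow_le_of_le_sup_pow_succ (IsLocalRing.maximalIdeal_le_jacobson ⊥) fun x hx =>
      mem_span_sup_pow_succ_of_initialForm_mem_span _ n a hmem hx
        (hN (initialForm_mem_ker_pow _ N x hx))
  refine le_antisymm ?_ fun x hx => ⟨N, h𝔪N (Ideal.pow_mem_pow hx N)⟩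
  exact (Ideal.radical_mono hI𝔪).trans (IsLocalRing.maximalIdeal.isMaximal R).isPrime.radical.le

/-- If `a₁,…,a_d ∈ 𝔪` have initial forms in `gr_𝔪(R)` generating an
ideal whose radical is the irrelevant ideal, then `⟨a₁,…,a_d⟩` is `𝔪`-primary:
its radical equals `𝔪`. -/
theorem radical_span_eq_maximalIdeal_of_initialForms (R : Type) [CommRing R]
    [IsNoetherianRing R] [IsLocalRing R] (d : ℕ) (a : Fin d → R) (n : Fin d → ℕ)
    (hmem : ∀ i, a i ∈ IsLocalRing.maximalIdeal R ^ n i)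
    (hnot : ∀ i, a i ∉ IsLocalRing.maximalIdeal R ^ (n i + 1))
    (hrad : Ideal.radical (R := AssocGradedRing (IsLocalRing.maximalIdeal R))
        (Ideal.span (Set.range fun i =>
        initialForm (IsLocalRing.maximalIdeal R) (n i) (a i) (hmem i))) =
      RingHom.ker (grAugmentation (IsLocalRing.maximalIdeal R))) :
    (Ideal.span (Set.range a)).radical = IsLocalRing.maximalIdeal R :=
  radical_span_eq_maximalIdeal_of_initialForms_general R d a n hmem hrad

end
end

section
/- Let (R, 𝔪) be a Noetherian local ring, M a finitely generated R-module with 𝔪-stable filtration, and g₁,…,g_k elements of a submodule M' of M whose initial forms generate in(M') ⊆ gr(M) as a gr_𝔪(R)-module. Then g₁,…,g_k generate M'. -/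
/-- Let `(R, 𝔪)` be a Noetherian local ring, `M` a finitely generated
`R`-module with the `𝔪`-adic filtration, `M'` a submodule and `g₁,…,g_k ∈ M'` elements
whose initial forms generate `in(M') ⊆ gr(M)` as a `gr_𝔪(R)`-module.  (The generation
hypothesis is phrased filtration-wise: every `m ∈ M' ∩ 𝔪ⁿM` agrees, modulo `𝔪^{n+1}M`,
with a combination `Σ cᵢ gᵢ` whose coefficients satisfy `cᵢ ∈ 𝔪^{n - νᵢ}` where
`gᵢ ∈ 𝔪^{νᵢ}M`.)  Then `g₁,…,g_k` generate `M'`. -/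
theorem span_eq_of_initialForms_generate (R : Type) [CommRing R] [IsNoetherianRing R]
    [IsLocalRing R] (M : Type) [AddCommGroup M] [Module R M] [Module.Finite R M]
    (M' : Submodule R M) (k : ℕ) (g : Fin k → M) (ν : Fin k → ℕ)
    (hg : ∀ i, g i ∈ M')
    (hν : ∀ i, g i ∈ (IsLocalRing.maximalIdeal R ^ ν i • ⊤ : Submodule R M))
    (hgen : ∀ n : ℕ, ∀ m ∈ M' ⊓ (IsLocalRing.maximalIdeal R ^ n • ⊤ : Submodule R M),
      ∃ c : Fin k → R, (∀ i, c i ∈ IsLocalRing.maximalIdeal R ^ (n - ν i)) ∧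
        m - ∑ i, c i • g i ∈ (IsLocalRing.maximalIdeal R ^ (n + 1) • ⊤ : Submodule R M)) :
    Submodule.span R (Set.range g) = M' := by
  set I := IsLocalRing.maximalIdeal R with hI
  set N := Submodule.span R (Set.range g) with hN
  have hNM' : N ≤ M' := Submodule.span_le.mpr (by rintro _ ⟨i, rfl⟩; exact hg i)
  refine le_antisymm hNM' ?_
  intro m hm
  have key : ∀ n, m ∈ N ⊔ (I ^ n • ⊤ : Submodule R M) := by
    intro n
    induction n with
    | zero =>
      have : (I ^ 0 • ⊤ : Submodule R M) = ⊤ := by simp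
      rw [this]; exact Submodule.mem_sup_right Submodule.mem_top
    | succ n ih =>
      obtain ⟨a, ha, b, hb, hab⟩ := Submodule.mem_sup.mp ih
      have hbeq : b = m - a := by rw [← hab]; abel
      have hbM' : b ∈ M' ⊓ (I ^ n • ⊤ : Submodule R M) :=
        ⟨hbeq ▸ M'.sub_mem hm (hNM' ha), hb⟩
      obtain ⟨c, _, hrem⟩ := hgen n b hbM'
      have hsum : a + ∑ i, c i • g i ∈ N :=
        N.add_mem ha (Submodule.sum_mem _ fun i _ =>
          N.smul_mem _ (Submodule.subset_span ⟨i, rfl⟩))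
      have : m = (a + ∑ i, c i • g i) + (b - ∑ i, c i • g i) := by
        rw [← hab]; abel
      rw [this]
      exact Submodule.mem_sup.mpr ⟨_, hsum, _, hrem, rfl⟩
  -- pass to the quotient M ⧸ N and use Krull's intersection theorem
  have hmk : N.mkQ m ∈ (⨅ n : ℕ, I ^ n • ⊤ : Submodule R (M ⧸ N)) := by
    refine Submodule.mem_iInf _ |>.mpr fun n => ?_
    obtain ⟨a, ha, b, hb, hab⟩ := Submodule.mem_sup.mp (key n)
    have hma : N.mkQ a = 0 := (Submodule.Quotient.mk_eq_zero N).mpr ha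
    have : N.mkQ m = N.mkQ b := by rw [← hab, map_add, hma, zero_add]
    rw [this]
    have : (I ^ n • ⊤ : Submodule R (M ⧸ N)) = Submodule.map N.mkQ (I ^ n • ⊤) := by
      rw [Submodule.map_smul'', Submodule.map_top, Submodule.range_mkQ]
    rw [this]
    exact ⟨b, hb, rfl⟩
  have hbot : (⨅ n : ℕ, I ^ n • ⊤ : Submodule R (M ⧸ N)) = ⊥ :=
    Ideal.iInf_pow_smul_eq_bot_of_isLocalRing I
      (IsLocalRing.maximalIdeal.isMaximal R).ne_top
  rw [hbot] at hmk
  exact (Submodule.Quotient.mk_eq_zero N).mp hmk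
end
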